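/- arXiv:2601.12200 — 10 statements merged into one kernel-verified Lean document; each statement's English description precedes it below -/
import Mathlib

section
/- For any strings Y and Z, Y is a subsequence of Z if and only if the concatenation YY is a subsequence of the concatenation ZZ. -/
open List

variable {α : Type*}

/-- The substring of `S` from 1-indexed position `a` to position `b`, inclusive
(empty when `a > b`). -/
def substr (S : List α) (a b : ℕ) : List α := (S.drop (a - 1)).take (b + 1 - a)

/-- `X` is a square subsequence of `S`. -/
def IsSquareSubseq (S X : List α) : Prop := (∃ Y, X = Y ++ Y) ∧ X <+ S

/-- `X` is a maximal square subsequence of `S`: it is a square subsequence of `S` and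
is not a proper subsequence of any other square subsequence of `S`. -/
def IsMaxSquareSubseq (S X : List α) : Prop :=
  IsSquareSubseq S X ∧ ∀ X', IsSquareSubseq S X' → X <+ X' → X' = X

/-- The square subsequence `Y ++ Y` is right-extendable in `S`. -/
def RightExtendable (S Y : List α) : Prop := ∃ y : α, Y ++ [y] ++ Y ++ [y] <+ S

/-- The square subsequence `Y ++ Y` is left-extendable in `S`. -/
def LeftExtendable (S Y : List α) : Prop := ∃ y : α, [y] ++ Y ++ [y] ++ Y <+ S

/-- The square subsequence `Y ++ Y` is inner-extendable in `S`. -/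
def InnerExtendable (S Y : List α) : Prop :=
  ∃ (y : α) (Y₁ Y₂ : List α), Y = Y₁ ++ Y₂ ∧ Y₁ ≠ [] ∧ Y₂ ≠ [] ∧
    Y₁ ++ [y] ++ Y₂ ++ Y₁ ++ [y] ++ Y₂ <+ S

/-- `X` is a `k`-repeating subsequence of `S`: the `k`-fold concatenation of `X`
is a subsequence of `S`. -/
def IsKRep (k : ℕ) (S X : List α) : Prop := (List.replicate k X).flatten <+ S

/-- `X` is a maximal `k`-repeating subsequence of `S`: the only `k`-repeating
subsequence of `S` having `X` as a subsequence is `X` itself. -/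
def IsMaxKRep (k : ℕ) (S X : List α) : Prop :=
  IsKRep k S X ∧ ∀ Y, IsKRep k S Y → X <+ Y → Y = X

/-- A `σ`-split point for `A` and `B` in `S`: a strictly increasing `k`-tuple of
1-indexed positions of `S` carrying `σ`, such that around each position `p i` one
can place `A` immediately to its left and `B` immediately to its right within a
window `[a i, b i]`, with consecutive windows disjoint (`b i < a (i+1)`). -/
def IsSplitPoint (S : List α) (σ : α) (A B : List α) (k : ℕ) (p : Fin k → ℕ) : Prop :=
  StrictMono p ∧
  (∀ i, 1 ≤ p i ∧ p i ≤ S.length ∧ substr S (p i) (p i) = [σ]) ∧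
  ∃ a b : Fin k → ℕ,
    (∀ i, 1 ≤ a i ∧ a i ≤ p i ∧ p i ≤ b i ∧ b i ≤ S.length ∧
      A <+ substr S (a i) (p i - 1) ∧ B <+ substr S (p i + 1) (b i)) ∧
    ∀ i j : Fin k, (i : ℕ) + 1 = (j : ℕ) → b i < a j

/-- A `σ`-start for `σ^r` in `S`: a strictly increasing `k`-tuple of 1-indexed
positions of `S` carrying `σ`, such that (with `p (k+1) = |S| + 1`) the string
`σ^r` is a subsequence of `S[p j .. p (j+1) − 1]` for every `j`. -/
def IsSigmaStart (S : List α) (σ : α) (r k : ℕ) (p : Fin k → ℕ) : Prop :=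
  StrictMono p ∧
  (∀ i, 1 ≤ p i ∧ p i ≤ S.length ∧ substr S (p i) (p i) = [σ]) ∧
  ∀ i : Fin k, List.replicate r σ <+
    substr S (p i) ((if h : (i : ℕ) + 1 < k then p ⟨(i : ℕ) + 1, h⟩ else S.length + 1) - 1)

/-- `W` is a maximal common subsequence of `T₁` and `T₂` containing `X`. -/
def IsMCSContaining (T₁ T₂ X W : List α) : Prop :=
  X <+ W ∧ W <+ T₁ ∧ W <+ T₂ ∧ ∀ W', W <+ W' → W' <+ T₁ → W' <+ T₂ → W' = W

/-- `p` is the 1-indexed position of the `t`-th occurrence (1-indexed `t`) of `σ` in `S`: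
`S[p] = σ` and exactly `t - 1` occurrences of `σ` lie strictly before position `p`. -/
def NthOccPos [DecidableEq α] (S : List α) (σ : α) (t p : ℕ) : Prop :=
  1 ≤ p ∧ p ≤ S.length ∧ substr S p p = [σ] ∧ (substr S 1 (p - 1)).count σ = t - 1

/-- `j` is the leftmost anchor of `Y` with position `i` in `S`: the smallest index `j`
such that `Y` is a subsequence of `S[i..j]`. -/
def LeftmostAnchor (S Y : List α) (i j : ℕ) : Prop :=
  Y <+ substr S i j ∧ ∀ j', Y <+ substr S i j' → j ≤ j'

/-- `Y` is an Algorithm-1 output for `S` and `σ` (Algorithm 1 of the paper), where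
`ℓ = count σ S` and `e = ⌊ℓ/2⌋`. -/
def Alg1Output [DecidableEq α] (S : List α) (σ : α) (Y : List α) : Prop :=
  ∃ (i1 ie1 : ℕ) (Y₀ : List α),
    NthOccPos S σ 1 i1 ∧
    NthOccPos S σ (S.count σ / 2 + 1) ie1 ∧
    IsMCSContaining (substr S i1 (ie1 - 1)) (substr S ie1 S.length)
      (List.replicate (S.count σ / 2) σ) Y₀ ∧
    ((Y = Y₀ ∧ (Odd (S.count σ) → ∀ ie2, NthOccPos S σ (S.count σ / 2 + 2) ie2 →
        ¬ Y₀ <+ substr S ie2 S.length)) ∨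
     (Odd (S.count σ) ∧ ∃ ie2, NthOccPos S σ (S.count σ / 2 + 2) ie2 ∧
        Y₀ <+ substr S ie2 S.length ∧
        IsMCSContaining (substr S i1 (ie2 - 1)) (substr S ie2 S.length) Y₀ Y))

/-- `Z` is an Algorithm-2 output for `S` and `σ` built from the Algorithm-1 output `Y`
(Algorithm 2 of the paper). -/
def Alg2Output [DecidableEq α] (S : List α) (σ : α) (Y Z : List α) : Prop :=
  ∃ (i1 i2 j1 : ℕ) (Z₀ : List α),
    NthOccPos S σ 1 i1 ∧ NthOccPos S σ 2 i2 ∧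
    LeftmostAnchor S Y i1 j1 ∧
    IsMCSContaining (substr S 1 j1) (substr S (j1 + 1) S.length) Y Z₀ ∧
    ((Z = Z₀ ∧ (Odd (S.count σ) → ∀ j2, LeftmostAnchor S Y i2 j2 →
        ¬ Z₀ <+ substr S (j2 + 1) S.length)) ∨
     (Odd (S.count σ) ∧ ∃ j2, LeftmostAnchor S Y i2 j2 ∧
        Z₀ <+ substr S (j2 + 1) S.length ∧
        IsMCSContaining (substr S 1 j2) (substr S (j2 + 1) S.length) Z₀ Z))

/-- For any strings `Y` and `Z`, `Y` is a subsequence of `Z` if and only if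
`YY` is a subsequence of `ZZ`. -/
theorem sublist_iff_append_self_sublist_append_self {α : Type*} (Y Z : List α) :
    Y <+ Z ↔ Y ++ Y <+ Z ++ Z := by
  constructor
  · exact fun h => h.append h
  · intro h
    rw [List.sublist_append_iff] at h
    obtain ⟨l₁, l₂, heq, h₁, h₂⟩ := h
    rcases List.append_eq_append_iff.mp heq with ⟨a, ha1, ha2⟩ | ⟨c, hc1, hc2⟩
    · exact (ha1 ▸ List.sublist_append_left Y a).trans h₁
    · exact (hc2 ▸ List.sublist_append_right c Y).trans h₂
end

section
/- Let S be a string and Y a string such that YY is a subsequence of S. Then YY is a maximal square subsequence of S if and only if YY is not right-extendable, not left-extendable, and not inner-extendable in S. -/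
open List

variable {α : Type*}

/-!
`YY ⊆ ZZ` forces `Y ⊆ Z`, since one half of `YY` lies inside one half of `ZZ`. So if `YY` is
not maximal, some square `ZZ ⊆ S` has `Y` as a proper subsequence of `Z`, and some single
letter inserted into `Y` already gives a square subsequence of `S`. Inserting it at the end,
at the front or strictly inside `Y` is exactly right-, left- or inner-extendability.
-/

namespace List

theorem Sublist.exists_insert_sublist_of_ne {Y Z : List α} (h : Y <+ Z) (hne : Y ≠ Z) :
    ∃ (Y₁ Y₂ : List α) (y : α), Y = Y₁ ++ Y₂ ∧ Y₁ ++ y :: Y₂ <+ Z := by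
  induction h with
  | slnil => exact absurd rfl hne
  | cons a h _ => exact ⟨[], _, a, rfl, h.cons_cons a⟩
  | @cons_cons l₁ l₂ a _ ih =>
    obtain ⟨Y₁, Y₂, y, rfl, hs⟩ := ih (fun heq => hne (heq ▸ rfl))
    exact ⟨a :: Y₁, Y₂, y, rfl, hs.cons_cons a⟩

theorem sublist_of_append_self_sublist_append_self {Y Z : List α} (h : Y ++ Y <+ Z ++ Z) :
    Y <+ Z := by
  obtain ⟨l₁, l₂, heq, h₁, h₂⟩ := sublist_append_iff.mp h
  have hlen : l₁.length + l₂.length = Y.length + Y.length := by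
    simpa only [length_append] using congrArg length heq.symm
  by_cases hl : Y.length ≤ l₁.length
  · exact (prefix_of_prefix_length_le ⟨Y, rfl⟩ ⟨l₂, heq.symm⟩ hl).sublist.trans h₁
  · exact (suffix_of_suffix_length_le ⟨Y, rfl⟩ ⟨l₁, heq.symm⟩ (by omega)).sublist.trans h₂

end List

open List

def OneLetterExtendable (S Y : List α) : Prop :=
  ∃ (Y₁ Y₂ : List α) (y : α), Y = Y₁ ++ Y₂ ∧ (Y₁ ++ y :: Y₂) ++ (Y₁ ++ y :: Y₂) <+ S

theorem isMaxSquareSubseq_iff_not_oneLetterExtendable {S Y : List α} (h : Y ++ Y <+ S) :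
    IsMaxSquareSubseq S (Y ++ Y) ↔ ¬ OneLetterExtendable S Y := by
  constructor
  · rintro ⟨-, hmax⟩ ⟨Y₁, Y₂, y, rfl, hins⟩
    have hsub : Y₁ ++ Y₂ <+ Y₁ ++ y :: Y₂ := (sublist_cons_self y Y₂).append_left Y₁
    have heq := congrArg length (hmax _ ⟨⟨_, rfl⟩, hins⟩ (hsub.append hsub))
    simp only [length_append, length_cons] at heq
    omega
  · intro hnone
    refine ⟨⟨⟨Y, rfl⟩, h⟩, ?_⟩
    rintro _ ⟨⟨Z, rfl⟩, hZS⟩ hsub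
    by_contra hne
    obtain ⟨Y₁, Y₂, y, hY, hins⟩ :=
      (sublist_of_append_self_sublist_append_self hsub).exists_insert_sublist_of_ne
        (fun hYZ => hne (hYZ ▸ rfl))
    exact hnone ⟨Y₁, Y₂, y, hY, (hins.append hins).trans hZS⟩

theorem oneLetterExtendable_iff {S Y : List α} :
    OneLetterExtendable S Y ↔
      RightExtendable S Y ∨ LeftExtendable S Y ∨ InnerExtendable S Y := by
  constructor
  · rintro ⟨Y₁, Y₂, y, rfl, hins⟩
    rcases eq_or_ne Y₂ [] with rfl | hY₂
    · exact .inl ⟨y, by simpa using hins⟩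
    rcases eq_or_ne Y₁ [] with rfl | hY₁
    · exact .inr (.inl ⟨y, by simpa using hins⟩)
    exact .inr (.inr ⟨y, Y₁, Y₂, rfl, hY₁, hY₂, by simpa using hins⟩)
  · rintro (⟨y, hy⟩ | ⟨y, hy⟩ | ⟨y, Y₁, Y₂, rfl, -, -, hy⟩)
    · exact ⟨Y, [], y, (append_nil Y).symm, by simpa using hy⟩
    · exact ⟨[], Y, y, rfl, by simpa using hy⟩
    · exact ⟨Y₁, Y₂, y, rfl, by simpa using hy⟩

/-- If `YY` is a subsequence of `S`, then `YY` is a maximal square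
subsequence of `S` iff `YY` is not right-, not left-, and not inner-extendable in `S`. -/
theorem maximal_square_iff_not_extendable {α : Type*} (S Y : List α)
    (h : Y ++ Y <+ S) :
    IsMaxSquareSubseq S (Y ++ Y) ↔
      ¬ RightExtendable S Y ∧ ¬ LeftExtendable S Y ∧ ¬ InnerExtendable S Y := by
  rw [isMaxSquareSubseq_iff_not_oneLetterExtendable h, oneLetterExtendable_iff]
  tauto
end

section
/- Let S be a string, σ a character, A and B strings, and k ≥ 1 an integer. Then the string AσB is a k-repeating subsequence of S if and only if there exists a σ-split point for A and B in S. -/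
/-!
Both sides describe `k` windows of `S`, ordered left to right and pairwise disjoint, each
containing `AσB` as a subsequence. An embedding of `(AσB)^k` into `S` is cut into such windows
copy by copy, and conversely the windows concatenate to an embedding; inside a window, the
image of `σ` is the split position.
-/

open List

variable {α : Type*}

namespace List

lemma append_singleton_append_sublist_iff {A B L : List α} {σ : α} :
    A ++ [σ] ++ B <+ L ↔ ∃ P Q, L = P ++ σ :: Q ∧ A <+ P ∧ B <+ Q := by
  constructor
  · intro h
    obtain ⟨L₁, L₂, rfl, hA, hσB⟩ := append_sublist_iff.mp (append_assoc A [σ] B ▸ h)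
    obtain ⟨L₂₁, L₂₂, rfl, hσ, hB⟩ := cons_sublist_iff.mp hσB
    obtain ⟨U, V, rfl⟩ := append_of_mem hσ
    exact ⟨L₁ ++ U, V ++ L₂₂, by simp, hA.trans (sublist_append_left _ _),
      hB.trans (sublist_append_right _ _)⟩
  · rintro ⟨P, Q, rfl, hA, hB⟩
    simpa using hA.append (hB.cons_cons σ)

end List

lemma Fin.strictMono_of_lt_of_val_add_one_eq {β : Type*} [Preorder β] {n : ℕ} {f : Fin n → β}
    (h : ∀ i j : Fin n, (i : ℕ) + 1 = j → f i < f j) : StrictMono f := by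
  cases n with
  | zero => exact fun i => i.elim0
  | succ n => exact Fin.strictMono_iff_lt_succ.mpr fun i => h _ _ (by simp)

lemma length_substr (S : List α) {a b : ℕ} (ha : 1 ≤ a) (hb : b ≤ S.length) :
    (substr S a b).length = b + 1 - a := by
  simp only [substr, length_take, length_drop]
  omega

lemma substr_append_substr (S : List α) {a c b : ℕ} (ha : 1 ≤ a) (hac : a ≤ c + 1)
    (hcb : c ≤ b) : substr S a c ++ substr S (c + 1) b = substr S a b := by
  rw [substr, substr, substr, show b + 1 - a = (c + 1 - a) + (b + 1 - (c + 1)) by omega,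
    take_add, drop_drop, show a - 1 + (c + 1 - a) = c + 1 - 1 by omega]

lemma substr_append_substr_self_append_substr (S : List α) {a p b : ℕ} (ha : 1 ≤ a)
    (hap : a ≤ p) (hpb : p ≤ b) :
    substr S a (p - 1) ++ substr S p p ++ substr S (p + 1) b = substr S a b := by
  rw [show substr S a (p - 1) ++ substr S p p = substr S a p by
      simpa [show p - 1 + 1 = p by omega] using
        substr_append_substr S ha (c := p - 1) (b := p) (by omega) (by omega),
    substr_append_substr S ha (by omega) hpb]

lemma substr_succ_add (S : List α) (t n : ℕ) : substr S (t + 1) (t + n) = (S.drop t).take n := by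
  simp only [substr, Nat.add_sub_cancel, show t + n + 1 - (t + 1) = n by omega]

lemma drop_pred_eq_substr_append_drop (S : List α) {a b : ℕ} (ha : 1 ≤ a) (hab : a ≤ b + 1) :
    S.drop (a - 1) = substr S a b ++ S.drop b := by
  conv_lhs => rw [← take_append_drop (b + 1 - a) (S.drop (a - 1))]
  rw [substr, drop_drop, show a - 1 + (b + 1 - a) = b by omega]

lemma append_singleton_append_sublist_substr_iff (S A B : List α) (σ : α) {a b : ℕ}
    (ha : 1 ≤ a) (hb : b ≤ S.length) :
    A ++ [σ] ++ B <+ substr S a b ↔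
      ∃ p, a ≤ p ∧ p ≤ b ∧ substr S p p = [σ] ∧
        A <+ substr S a (p - 1) ∧ B <+ substr S (p + 1) b := by
  constructor
  · intro h
    obtain ⟨P, Q, hPQ, hA, hB⟩ := append_singleton_append_sublist_iff.mp h
    have hlen := congrArg length hPQ
    simp only [length_substr S ha hb, length_append, length_cons] at hlen
    set p := a + P.length
    rw [← substr_append_substr_self_append_substr S ha (p := p) (by omega) (by omega),
      append_assoc] at hPQ
    obtain ⟨hP, hσQ⟩ := append_inj hPQ (by rw [length_substr S ha (by omega)]; omega)
    obtain ⟨hσ, hQ⟩ := append_inj (s₂ := [σ]) hσQ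
      (by rw [length_substr S (a := p) (by omega) (by omega)]; simp)
    exact ⟨p, by omega, by omega, hσ, hP ▸ hA, hQ ▸ hB⟩
  · rintro ⟨p, hap, hpb, hσ, hA, hB⟩
    rw [← substr_append_substr_self_append_substr S ha hap hpb, hσ]
    exact (hA.append (Sublist.refl _)).append hB

lemma flatten_replicate_sublist_drop_of_windows {S X : List α} {k : ℕ}
    (a b : Fin (k + 1) → ℕ) (hwin : ∀ i, 1 ≤ a i ∧ a i ≤ b i + 1 ∧ X <+ substr S (a i) (b i))
    (hchain : ∀ i j : Fin (k + 1), (i : ℕ) + 1 = j → b i < a j) :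
    (replicate (k + 1) X).flatten <+ S.drop (a 0 - 1) := by
  induction k with
  | zero =>
    obtain ⟨ha, hab, hX⟩ := hwin 0
    simpa [drop_pred_eq_substr_append_drop S ha hab] using hX.trans (sublist_append_left _ _)
  | succ k ih =>
    have htail : (replicate (k + 1) X).flatten <+ S.drop (a 1 - 1) :=
      ih (Fin.tail a) (Fin.tail b) (fun i => hwin i.succ)
        (fun i j hij => hchain i.succ j.succ (by simpa using hij))
    have hb₀a₁ : b 0 < a 1 := hchain 0 1 rfl
    obtain ⟨ha, hab, hX⟩ := hwin 0
    rw [replicate_succ, flatten_cons, drop_pred_eq_substr_append_drop S ha hab]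
    exact hX.append (htail.trans (drop_sublist_drop_left S (by omega)))

lemma flatten_replicate_sublist_of_windows {S X : List α} {k : ℕ} (a b : Fin k → ℕ)
    (hwin : ∀ i, 1 ≤ a i ∧ a i ≤ b i + 1 ∧ X <+ substr S (a i) (b i))
    (hchain : ∀ i j : Fin k, (i : ℕ) + 1 = j → b i < a j) :
    (replicate k X).flatten <+ S := by
  cases k with
  | zero => simp
  | succ k =>
    exact (flatten_replicate_sublist_drop_of_windows a b hwin hchain).trans (drop_sublist _ _)

lemma exists_windows_of_flatten_replicate_sublist_drop {S X : List α} (hX : X ≠ [])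
    (k t : ℕ) (h : (replicate k X).flatten <+ S.drop t) :
    ∃ a b : Fin k → ℕ,
      (∀ i, t < a i ∧ a i ≤ b i ∧ b i ≤ S.length ∧ X <+ substr S (a i) (b i)) ∧
      ∀ i j : Fin k, (i : ℕ) + 1 = j → b i < a j := by
  induction k generalizing t with
  | zero => exact ⟨Fin.elim0, Fin.elim0, fun i => i.elim0, fun i => i.elim0⟩
  | succ k ih =>
    rw [replicate_succ, flatten_cons] at h
    obtain ⟨R₁, R₂, hR, hXR₁, hrest⟩ := append_sublist_iff.mp h
    set n := R₁.length
    have hn : 0 < n := (length_pos_iff.mpr hX).trans_le hXR₁.length_le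
    have htn : t + n ≤ S.length := by
      have := congrArg length hR
      simp only [length_drop, length_append] at this
      omega
    have hR₁ : substr S (t + 1) (t + n) = R₁ := by rw [substr_succ_add, hR, take_left]
    have hR₂ : S.drop (t + n) = R₂ := by rw [← drop_drop, hR, drop_left]
    obtain ⟨a, b, hwin, hchain⟩ := ih (t + n) (hR₂ ▸ hrest)
    refine ⟨Fin.cons (t + 1) a, Fin.cons (t + n) b, fun i => ?_, fun i j hij => ?_⟩
    · cases i using Fin.cases with
      | zero =>
        simp only [Fin.cons_zero]
        exact ⟨by omega, by omega, htn, hR₁ ▸ hXR₁⟩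
      | succ i =>
        simp only [Fin.cons_succ]
        obtain ⟨hta, hab, hbS, hXab⟩ := hwin i
        exact ⟨by omega, hab, hbS, hXab⟩
    · cases i using Fin.cases with
      | zero =>
        cases j using Fin.cases with
        | zero => simp at hij
        | succ j => simpa using (hwin j).1
      | succ i =>
        cases j using Fin.cases with
        | zero => simp at hij
        | succ j => simpa using hchain i j (by simpa using hij)

theorem krep_iff_exists_splitPoint_general {α : Type*} (S A B : List α) (σ : α) (k : ℕ) :
    IsKRep k S (A ++ [σ] ++ B) ↔ ∃ p : Fin k → ℕ, IsSplitPoint S σ A B k p := by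
  constructor
  · intro h
    obtain ⟨a, b, hwin, hchain⟩ :=
      exists_windows_of_flatten_replicate_sublist_drop (by simp) k 0 h
    choose p hap hpb hσ hA hB using fun i =>
      (append_singleton_append_sublist_substr_iff S A B σ (hwin i).1 (hwin i).2.2.1).mp
        (hwin i).2.2.2
    have hmono : StrictMono p := Fin.strictMono_of_lt_of_val_add_one_eq fun i j hij =>
      (hpb i).trans_lt ((hchain i j hij).trans_le (hap j))
    refine ⟨p, hmono, fun i => ⟨?_, ?_, hσ i⟩, a, b, fun i => ?_, hchain⟩
    · exact (hwin i).1.trans_le (hap i)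
    · exact (hpb i).trans (hwin i).2.2.1
    · exact ⟨(hwin i).1, hap i, hpb i, (hwin i).2.2.1, hA i, hB i⟩
  · rintro ⟨p, -, hpos, a, b, hwin, hchain⟩
    refine flatten_replicate_sublist_of_windows a b (fun i => ?_) hchain
    obtain ⟨ha, hap, hpb, hb, hA, hB⟩ := hwin i
    exact ⟨ha, by omega, (append_singleton_append_sublist_substr_iff S A B σ ha hb).mpr
      ⟨p i, hap, hpb, (hpos i).2.2, hA, hB⟩⟩

/-- `AσB` is a `k`-repeating subsequence of `S` iff there exists a
`σ`-split point for `A` and `B` in `S`. -/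
theorem krep_iff_exists_splitPoint {α : Type*} (S A B : List α) (σ : α) (k : ℕ)
    (hk : 1 ≤ k) :
    IsKRep k S (A ++ [σ] ++ B) ↔ ∃ p : Fin k → ℕ, IsSplitPoint S σ A B k p :=
  krep_iff_exists_splitPoint_general S A B σ k
end

section
/- Let S be a string in which the character σ occurs exactly ℓ times, and let r ≥ 1 and k ≥ 1 be integers with rk ≤ ℓ, and set R = ℓ − rk. Then the number of distinct σ-starts for σ^r in S (as k-tuples) is at most the binomial coefficient C(R + k, k). -/
open List

variable {α : Type*}

private lemma take_one_eq {l : List α} {σ : α} (h : l.take 1 = [σ]) :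
    ∃ h0 : 0 < l.length, l[0] = σ := by
  cases l with
  | nil => simp at h
  | cons a t =>
    simp only [List.take_succ_cons, List.take_zero, List.cons.injEq, and_true] at h
    exact ⟨by simp, h⟩

private lemma getElem_of_substr {S : List α} {σ : α} {p : ℕ} (h1 : 1 ≤ p) (h2 : p ≤ S.length)
    (h : substr S p p = [σ]) : ∃ hp : p - 1 < S.length, S[p - 1] = σ := by
  unfold substr at h
  rw [show p + 1 - p = 1 from by omega] at h
  obtain ⟨h0, hget⟩ := take_one_eq h
  have hlt : p - 1 < S.length := by omega
  refine ⟨hlt, ?_⟩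
  calc S[p-1] = S[(p-1) + 0] := by congr 1
    _ = (S.drop (p-1))[0]'h0 := (List.getElem_drop ..).symm
    _ = σ := hget

private lemma count_take_lt [DecidableEq α] {S : List α} {σ : α} {x y : ℕ}
    (hxy : x < y) (hx : x < S.length) (hget : S[x] = σ) :
    (S.take x).count σ < (S.take y).count σ := by
  have h1 : S.take (x+1) = S.take x ++ [σ] := by
    rw [List.take_succ, List.getElem?_eq_getElem hx, hget]; rfl
  have h2 : S.take y = S.take (x+1) ++ (S.drop (x+1)).take (y - (x+1)) := by
    rw [← List.take_add]; congr 1; omega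
  rw [h2, List.count_append, h1, List.count_append]
  simp only [List.count_singleton, beq_self_eq_true, if_true]
  omega

private lemma chain_le {k r : ℕ} (t : Fin k → ℕ)
    (hadj : ∀ i : ℕ, ∀ h : i + 1 < k, t ⟨i, by omega⟩ + r ≤ t ⟨i+1, h⟩) :
    ∀ (i j : ℕ) (hij : i ≤ j) (hj : j < k), t ⟨i, by omega⟩ + (j - i) * r ≤ t ⟨j, hj⟩ := by
  intro i j
  induction j with
  | zero =>
    intro hij hj
    obtain rfl : i = 0 := by omega
    simp
  | succ j ih =>
    intro hij hj
    rcases Nat.eq_or_lt_of_le hij with rfl | h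
    · simp
    · have h1 := ih (by omega) (by omega)
      have h2 := hadj j hj
      have h3 : (j + 1 - i) * r = (j - i) * r + r := by
        rw [show j + 1 - i = (j - i) + 1 from by omega, Nat.add_mul, Nat.one_mul]
      omega


private def tc [DecidableEq α] (S : List α) (σ : α) {k : ℕ} (p : Fin k → ℕ) (i : Fin k) : ℕ :=
  (S.take (p i - 1)).count σ


/-- If `σ` occurs exactly `ℓ` times in `S`, `r, k ≥ 1` and `rk ≤ ℓ`, then
the number of distinct `σ`-starts for `σ^r` in `S` is at most `C(R + k, k)` where
`R = ℓ − rk`. -/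
theorem card_sigmaStarts_le {α : Type*} [DecidableEq α] (S : List α) (σ : α)
    (r k ℓ : ℕ) (hr : 1 ≤ r) (hk : 1 ≤ k) (hℓ : S.count σ = ℓ) (hrk : r * k ≤ ℓ) :
    {p : Fin k → ℕ | IsSigmaStart S σ r k p}.Finite ∧
      {p : Fin k → ℕ | IsSigmaStart S σ r k p}.ncard ≤ Nat.choose (ℓ - r * k + k) k := by
  classical
  set N := ℓ - r * k + k with hN
  have hNpos : 0 < N := by omega
  set s : Set (Fin k → ℕ) := {p | IsSigmaStart S σ r k p} with hs
  -- occurrence facts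
  have hocc : ∀ p ∈ s, ∀ i : Fin k, 1 ≤ p i ∧ p i ≤ S.length ∧
      ∃ hlt : p i - 1 < S.length, S[p i - 1] = σ := by
    intro p hp i
    obtain ⟨-, h2, -⟩ := hp
    obtain ⟨ha, hb, hc⟩ := h2 i
    exact ⟨ha, hb, getElem_of_substr ha hb hc⟩
  -- adjacent gap
  have hadj : ∀ p ∈ s, ∀ i : ℕ, ∀ h : i + 1 < k,
      tc S σ p ⟨i, by omega⟩ + r ≤ tc S σ p ⟨i+1, h⟩ := by
    intro p hp i h
    obtain ⟨hmono, hpos, hrep⟩ := hp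
    have h1 := hrep ⟨i, by omega⟩
    simp only [Fin.val_mk] at h1
    rw [dif_pos h] at h1
    set a := p ⟨i, by omega⟩ with ha
    set b := p ⟨i+1, h⟩ with hb
    have hab : a < b := hmono (by simp [Fin.mk_lt_mk])
    have ha1 : 1 ≤ a := (hpos _).1
    have hcount : r ≤ ((S.drop (a-1)).take ((b-1) + 1 - a)).count σ := by
      have := h1.count_le σ
      rwa [List.count_replicate_self] at this
    have hsplit : S.take (b-1) = S.take (a-1) ++ (S.drop (a-1)).take ((b-1) + 1 - a) := by
      rw [show (b-1) + 1 - a = b - a from by omega, ← List.take_add,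
        show a - 1 + (b - a) = b - 1 from by omega]
    show (S.take (a - 1)).count σ + r ≤ (S.take (b - 1)).count σ
    rw [hsplit, List.count_append]
    omega
  -- last gap
  have hlast : ∀ p ∈ s, tc S σ p ⟨k-1, by omega⟩ + r ≤ ℓ := by
    intro p hp
    obtain ⟨hmono, hpos, hrep⟩ := hp
    have h1 := hrep ⟨k-1, by omega⟩
    simp only [Fin.val_mk] at h1
    rw [dif_neg (by omega)] at h1
    set a := p ⟨k-1, by omega⟩ with ha
    have ha1 : 1 ≤ a := (hpos _).1
    have ha2 : a ≤ S.length := (hpos _).2.1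
    have hw : substr S a (S.length + 1 - 1) = S.drop (a-1) := by
      unfold substr
      apply List.take_of_length_le
      simp only [List.length_drop]
      omega
    rw [hw] at h1
    have hcount : r ≤ (S.drop (a-1)).count σ := by
      have := h1.count_le σ
      rwa [List.count_replicate_self] at this
    have hsum : (S.take (a-1)).count σ + (S.drop (a-1)).count σ = ℓ := by
      rw [← List.count_append, List.take_append_drop, hℓ]
    show (S.take (a - 1)).count σ + r ≤ ℓ
    omega
  have hchain : ∀ p ∈ s, ∀ (i j : ℕ) (hij : i ≤ j) (hj : j < k),
      tc S σ p ⟨i, by omega⟩ + (j - i) * r ≤ tc S σ p ⟨j, hj⟩ :=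
    fun p hp => chain_le (tc S σ p) (hadj p hp)
  have hlow : ∀ p ∈ s, ∀ i : Fin k, (i : ℕ) * r ≤ tc S σ p i := by
    intro p hp i
    have h := hchain p hp 0 i (Nat.zero_le _) i.isLt
    simp only [Nat.sub_zero, Fin.eta] at h
    omega
  have hhigh : ∀ p ∈ s, ∀ i : Fin k,
      tc S σ p i + (k - 1 - (i : ℕ)) * r ≤ tc S σ p ⟨k-1, by omega⟩ := by
    intro p hp i
    have h := hchain p hp i (k-1) (by omega) (by omega)
    simpa only [Fin.eta] using h
  -- the value map
  have hvlt : ∀ p ∈ s, ∀ i : Fin k, tc S σ p i - (i : ℕ) * r + (i : ℕ) < N := by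
    intro p hp i
    have h1 := hhigh p hp i
    have h2 := hlast p hp
    have h3 := hlow p hp i
    have hik := i.isLt
    have hm : (i : ℕ) * r + (k - 1 - (i : ℕ)) * r + r = r * k := by
      have e : ((i : ℕ) + (k - 1 - (i : ℕ)) + 1) * r = r * k := by
        rw [show (i : ℕ) + (k - 1 - (i : ℕ)) + 1 = k from by omega, Nat.mul_comm]
      calc (i : ℕ) * r + (k - 1 - (i : ℕ)) * r + r
          = ((i : ℕ) + (k - 1 - (i : ℕ)) + 1) * r := by ring
        _ = r * k := e
    omega
  have hvmono : ∀ p ∈ s, ∀ i j : Fin k, i < j →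
      tc S σ p i - (i : ℕ) * r + (i : ℕ) < tc S σ p j - (j : ℕ) * r + (j : ℕ) := by
    intro p hp i j hij
    have h1 := hchain p hp i j (le_of_lt hij) j.isLt
    simp only [Fin.eta] at h1
    have h3 := hlow p hp i
    have hm : (i : ℕ) * r + ((j : ℕ) - (i : ℕ)) * r = (j : ℕ) * r := by
      rw [← Nat.add_mul, show (i : ℕ) + ((j : ℕ) - (i : ℕ)) = (j : ℕ) from by omega]
    have hij' : (i : ℕ) < (j : ℕ) := hij
    omega
  set f : (Fin k → ℕ) → Fin k → Fin N :=
    fun p i => ⟨(tc S σ p i - (i : ℕ) * r + (i : ℕ)) % N, Nat.mod_lt _ hNpos⟩ with hf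
  set F : (Fin k → ℕ) → Finset (Fin N) := fun p => Finset.image (f p) Finset.univ with hF
  have hfval : ∀ p ∈ s, ∀ i : Fin k, (f p i : ℕ) = tc S σ p i - (i : ℕ) * r + (i : ℕ) :=
    fun p hp i => Nat.mod_eq_of_lt (hvlt p hp i)
  have hfmono : ∀ p ∈ s, StrictMono (f p) := by
    intro p hp i j hij
    rw [Fin.lt_def, hfval p hp, hfval p hp]
    exact hvmono p hp i j hij
  have hcard : ∀ p ∈ s, (F p).card = k := by
    intro p hp
    rw [hF]
    rw [Finset.card_image_of_injective _ (hfmono p hp).injective, Finset.card_univ,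
      Fintype.card_fin]
  have hmaps : ∀ p ∈ s, F p ∈ (↑(Finset.powersetCard k (Finset.univ : Finset (Fin N))) :
      Set (Finset (Fin N))) := by
    intro p hp
    rw [Finset.mem_coe, Finset.mem_powersetCard]
    exact ⟨Finset.subset_univ _, hcard p hp⟩
  have hinj : Set.InjOn F s := by
    intro p hp q hq hFeq
    have hcardp := hcard p hp
    have hmemq : ∀ x, f q x ∈ F p := by
      rw [hFeq]; exact fun x => Finset.mem_image_of_mem _ (Finset.mem_univ x)
    have e1 := Finset.orderEmbOfFin_unique hcardp
      (fun x => Finset.mem_image_of_mem (f p) (Finset.mem_univ x)) (hfmono p hp)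
    have e2 := Finset.orderEmbOfFin_unique hcardp hmemq (hfmono q hq)
    have hfe : f p = f q := e1.trans e2.symm
    have htc : ∀ i : Fin k, tc S σ p i = tc S σ q i := by
      intro i
      have := congrFun hfe i
      have hv : tc S σ p i - (i : ℕ) * r + (i : ℕ) = tc S σ q i - (i : ℕ) * r + (i : ℕ) := by
        rw [← hfval p hp i, ← hfval q hq i, this]
      have h1 := hlow p hp i
      have h2 := hlow q hq i
      omega
    funext i
    obtain ⟨hp1, hp2, hplt, hpget⟩ := hocc p hp i
    obtain ⟨hq1, hq2, hqlt, hqget⟩ := hocc q hq i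
    have hct : (S.take (p i - 1)).count σ = (S.take (q i - 1)).count σ := htc i
    rcases lt_trichotomy (p i) (q i) with h | h | h
    · exact absurd hct (Nat.ne_of_lt (count_take_lt (by omega) hplt hpget))
    · exact h
    · exact absurd hct.symm (Nat.ne_of_lt (count_take_lt (by omega) hqlt hqget))
  constructor
  · exact Set.Finite.of_finite_image (Set.toFinite _) hinj
  · have hle := Set.ncard_le_ncard_of_injOn F hmaps hinj (Set.toFinite _)
    rwa [Set.ncard_coe_finset, Finset.card_powersetCard, Finset.card_univ,
      Fintype.card_fin] at hle
end

section
/- Let S be a string, σ a character, and r ≥ 1, k ≥ 1 integers. A k-tuple of positions of S is a σ-start for σ^r in S if and only if it is a σ-split point for the empty string ε and σ^{r−1} in S. -/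
open List

variable {α : Type*}

lemma substr_cons_of_self {α : Type*} (S : List α) (σ : α) (m e : ℕ)
    (hm : 1 ≤ m) (hme : m ≤ e) (h : substr S m m = [σ]) :
    substr S m e = σ :: substr S (m + 1) e := by
  unfold substr at *
  rcases hd : S.drop (m - 1) with _ | ⟨x, t⟩
  · rw [hd] at h; simp at h
  · rw [hd] at h
    have h1 : m + 1 - m = 1 := by omega
    rw [h1] at h
    simp at h
    have hx : x = σ := h
    have hdm : S.drop m = t := by
      have : S.drop m = (S.drop (m - 1)).drop 1 := by
        rw [List.drop_drop]; congr 1; omega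
      rw [this, hd]; rfl
    have h4 : m + 1 - 1 = m := by omega
    rw [h4, hdm, hx]
    have h2 : e + 1 - m = (e - m) + 1 := by omega
    have h3 : e + 1 - (m + 1) = e - m := by omega
    rw [h2, h3, List.take_succ_cons]

lemma substr_mono_right {α : Type*} (S : List α) (a b b' : ℕ) (h : b ≤ b') :
    substr S a b <+ substr S a b' := by
  unfold substr
  have : b + 1 - a ≤ b' + 1 - a := by omega
  calc (S.drop (a-1)).take (b+1-a) = ((S.drop (a-1)).take (b'+1-a)).take (b+1-a) := by
        rw [List.take_take, min_eq_left this]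
    _ <+ (S.drop (a-1)).take (b'+1-a) := List.take_sublist _ _

/-- A `k`-tuple of positions of `S` is a `σ`-start for `σ^r` in `S` iff it
is a `σ`-split point for the empty string and `σ^(r−1)` in `S`. -/
theorem sigmaStart_iff_splitPoint {α : Type*} (S : List α) (σ : α) (r k : ℕ)
    (hr : 1 ≤ r) (hk : 1 ≤ k) (p : Fin k → ℕ) :
    IsSigmaStart S σ r k p ↔ IsSplitPoint S σ [] (List.replicate (r - 1) σ) k p := by
  constructor
  · rintro ⟨hmono, hpos, hrep⟩
    refine ⟨hmono, hpos, p, fun i => if h : (i : ℕ) + 1 < k then p ⟨(i : ℕ) + 1, h⟩ - 1 else S.length, ?_, ?_⟩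
    · intro i
      dsimp only
      obtain ⟨h1, h2, h3⟩ := hpos i
      have key := hrep i
      set q : ℕ := if h : (i : ℕ) + 1 < k then p ⟨(i : ℕ) + 1, h⟩ else S.length + 1 with hq
      have hqb : (if h : (i : ℕ) + 1 < k then p ⟨(i : ℕ) + 1, h⟩ - 1 else S.length) = q - 1 := by
        rw [hq]; split <;> simp
      have hpq : p i + 1 ≤ q := by
        rw [hq]; split
        · next h => exact hmono (by simp [Fin.lt_def] : i < ⟨(i : ℕ) + 1, h⟩)
        · omega
      have hdecomp := substr_cons_of_self S σ (p i) (q - 1) h1 (by omega) h3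
      rw [show List.replicate r σ = σ :: List.replicate (r - 1) σ by
            rw [← List.replicate_succ]; congr 1; omega, hdecomp] at key
      have key2 : List.replicate (r - 1) σ <+ substr S (p i + 1) (q - 1) :=
        (List.cons_sublist_cons).mp key
      refine ⟨h1, le_refl _, ?_, ?_, by simp [substr], by rw [hqb]; exact key2⟩
      · rw [hqb]; omega
      · rw [hqb]
        rw [hq]; split
        · next h =>
          have := (hpos ⟨(i : ℕ) + 1, h⟩).2.1
          omega
        · omega
    · intro i j hij
      dsimp only
      split
      · next h =>
        have hj : j = ⟨(i : ℕ) + 1, h⟩ := by apply Fin.ext; simp [← hij]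
        have := (hpos j).1
        rw [hj] at this ⊢; omega
      · next h => omega
  · rintro ⟨hmono, hpos, a, b, hab, hsep⟩
    refine ⟨hmono, hpos, fun i => ?_⟩
    obtain ⟨ha1, ha2, ha3, ha4, _, hB⟩ := hab i
    obtain ⟨h1, h2, h3⟩ := hpos i
    set q : ℕ := if h : (i : ℕ) + 1 < k then p ⟨(i : ℕ) + 1, h⟩ else S.length + 1 with hq
    have hbq : b i ≤ q - 1 := by
      rw [hq]; split
      · next h =>
        have hsep' := hsep i ⟨(i : ℕ) + 1, h⟩ rfl
        have := (hab ⟨(i : ℕ) + 1, h⟩).2.1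
        omega
      · omega
    have hpq : p i + 1 ≤ q := by
      rw [hq]; split
      · next h => exact hmono (by simp [Fin.lt_def] : i < ⟨(i : ℕ) + 1, h⟩)
      · omega
    have hdecomp := substr_cons_of_self S σ (p i) (q - 1) h1 (by omega) h3
    rw [show List.replicate r σ = σ :: List.replicate (r - 1) σ by
          rw [← List.replicate_succ]; congr 1; omega, hdecomp]
    exact List.cons_sublist_cons.mpr (hB.trans (substr_mono_right S _ _ _ hbq))
end

section
/- Let S be a string in which the character σ occurs exactly ℓ ≥ 2 times, and let Y be an Algorithm-1 output for S and σ. Then Y is nonempty and the first character of Y is exactly σ. -/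
open List

variable {α : Type*}

/-! Both strings from which Algorithm 1 takes a maximal common subsequence start at an
occurrence of `σ`, and a maximal common subsequence of two strings with the same first letter
must start with that letter, since otherwise the letter could be prepended to it. The strings
are nonempty because they contain `σ^e` with `e = ⌊ℓ/2⌋ ≥ 1`. -/

theorem IsMCSContaining.head?_eq {T₁ T₂ X W : List α} {a : α}
    (h : IsMCSContaining T₁ T₂ X W) (h₁ : T₁.head? = some a) (h₂ : T₂.head? = some a) :
    W.head? = some a := by
  obtain ⟨-, hW₁, hW₂, hmax⟩ := h
  obtain ⟨t₁, rfl⟩ := List.head?_eq_some_iff.mp h₁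
  obtain ⟨t₂, rfl⟩ := List.head?_eq_some_iff.mp h₂
  by_contra hW
  have sublist_tail {t : List α} (hWt : W <+ a :: t) : W <+ t := by
    rcases List.sublist_cons_iff.mp hWt with hWt | ⟨r, rfl, -⟩
    · exact hWt
    · exact absurd rfl hW
  exact List.cons_ne_self a W <| hmax (a :: W) (W.sublist_cons_self a)
    ((sublist_tail hW₁).cons_cons a) ((sublist_tail hW₂).cons_cons a)

theorem head?_substr {S : List α} {p b : ℕ} (h : substr S p b ≠ []) :
    (substr S p b).head? = (substr S p p).head? := by
  have hlen : b + 1 - p ≠ 0 := by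
    rintro hz
    simp [substr, hz] at h
  simp [substr, List.head?_take, hlen]

theorem IsMCSContaining.head?_eq_of_substr {S X W : List α} {σ : α} {p b q c : ℕ}
    (h : IsMCSContaining (substr S p b) (substr S q c) X W) (hX : X ≠ [])
    (hp : substr S p p = [σ]) (hq : substr S q q = [σ]) :
    W.head? = some σ := by
  have ne_nil {T : List α} (hT : W <+ T) : T ≠ [] := by
    rintro rfl
    exact hX (List.sublist_nil.mp (h.1.trans hT))
  refine h.head?_eq ?_ ?_
  · rw [head?_substr (ne_nil h.2.1), hp]; rfl
  · rw [head?_substr (ne_nil h.2.2.1), hq]; rfl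

/-- If `σ` occurs exactly `ℓ ≥ 2` times in `S` and `Y` is an Algorithm-1
output for `S` and `σ`, then `Y` is nonempty and its first character is `σ`. -/
theorem alg1_output_head {α : Type*} [DecidableEq α] (S : List α) (σ : α)
    (hℓ : 2 ≤ S.count σ) (Y : List α) (hY : Alg1Output S σ Y) :
    Y ≠ [] ∧ Y.head? = some σ := by
  obtain ⟨i1, ie1, Y₀, hi1, hie1, hY₀, hY⟩ := hY
  have hσe : List.replicate (S.count σ / 2) σ ≠ [] := by
    simp only [ne_eq, List.replicate_eq_nil_iff]
    omega
  have hY₀σ : Y₀.head? = some σ := hY₀.head?_eq_of_substr hσe hi1.2.2.1 hie1.2.2.1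
  have hYσ : Y.head? = some σ := by
    rcases hY with ⟨rfl, -⟩ | ⟨-, ie2, hie2, -, hY⟩
    · exact hY₀σ
    · exact hY.head?_eq_of_substr (by rintro rfl; simp at hY₀σ) hi1.2.2.1 hie2.2.2.1
  exact ⟨by rintro rfl; simp at hYσ, hYσ⟩
end

section
/- Let S be a string in which the character σ occurs exactly ℓ ≥ 2 times, and let Y be an Algorithm-1 output for S and σ. Then for every string Z such that ZZ is a subsequence of S and YY is a subsequence of ZZ, the square subsequence ZZ is not right-extendable; that is, there is no character y such that ZyZy is a subsequence of S. -/
open List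

variable {α : Type*}

/-!
Let `e = ⌊ℓ/2⌋`. Any `Z` with `YY ⊆ ZZ` contains `Y₀ ⊇ σ^e`, while `ZyZy ⊆ S` uses at most `ℓ`
copies of `σ`; so `Z` has exactly `e` of them and `y ≠ σ`. Write `Z = AσB` with `σ ∉ A` and cut an
embedding of `ZyZy = (AσByA)·σBy` in front of its `(e+1)`-st `σ`: this cuts `S` in front of its
`j`-th `σ`, and counting leaves only `j = e+1`, or `j = e+2` for odd `ℓ`. Either way `σBy` is a
common subsequence of `S[i₁..i_j−1]` and `S[i_j..n]`. The maximal common subsequence that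
Algorithm 1 computed for this cut (`Y₀` for `j = e+1`, `Y` in case (b)) has too many `σ`s to skip
the leading `σ` of its block, so it lies in `σB` and is properly extended by `σBy`, contradicting
maximality; in case (a) with `j = e+2`, `Y₀ ⊆ σB ⊆ S[i_{e+2}..n]` is excluded by Algorithm 1.
-/

namespace List

theorem exists_eq_append_cons_of_append_cons_sublist {l l' S : List α} {a : α}
    (h : l ++ a :: l' <+ S) : ∃ G H, S = G ++ a :: H ∧ l <+ G ∧ l' <+ H := by
  obtain ⟨r₁, r₂, rfl, h₁, h₂⟩ := append_sublist_iff.1 h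
  obtain ⟨s₁, s₂, rfl, ha, h₃⟩ := cons_sublist_iff.1 h₂
  obtain ⟨x, z, rfl⟩ := append_of_mem ha
  exact ⟨r₁ ++ x, z ++ s₂, by simp, h₁.trans (sublist_append_left _ _),
    h₃.trans (sublist_append_right _ _)⟩

theorem cons_sublist_of_cons_sublist_append {a : α} {l A L : List α} (h : a :: l <+ A ++ L)
    (hA : a ∉ A) : a :: l <+ L := by
  induction A with
  | nil => exact h
  | cons b A ih =>
    cases h with
    | cons _ h => exact ih h fun h' => hA (mem_cons_of_mem b h')
    | cons_cons _ h => exact absurd mem_cons_self hA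

variable [DecidableEq α]

theorem sublist_cons_of_count_lt {a : α} {W A B M : List α} (hW : W <+ A ++ a :: B)
    (hA : a ∉ A) (hWM : W <+ a :: M) (hM : M.count a < W.count a) : W <+ a :: B := by
  cases hWM with
  | cons _ h => exact absurd (h.count_le a) (by omega)
  | cons_cons _ _ => exact cons_sublist_of_cons_sublist_append hW hA

theorem append_cons_inj_of_count_eq {a : α} {G H G' H' : List α}
    (h : G ++ a :: H = G' ++ a :: H') (hc : G.count a = G'.count a) : G = G' ∧ H = H' := by
  suffices G.length = G'.length by
    obtain ⟨rfl, hH⟩ := append_inj h this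
    exact ⟨rfl, (cons_inj_right a).1 hH⟩
  rcases append_eq_append_iff.1 h with ⟨c, rfl, hc'⟩ | ⟨c, rfl, hc'⟩ <;>
  cases c with
  | nil => simp
  | cons b c =>
    obtain ⟨rfl, -⟩ := cons_eq_cons.1 hc'
    simp only [count_append, count_cons_self] at hc
    omega

theorem count_eq_half_of_append_append_sublist {S Z : List α} {σ y : α}
    (h : Z ++ [y] ++ Z ++ [y] <+ S) (hZ : S.count σ / 2 ≤ Z.count σ) :
    Z.count σ = S.count σ / 2 ∧ y ≠ σ := by
  have := h.count_le σ
  by_cases hy : y = σ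
  · simp only [hy, count_append, count_singleton_self] at this
    omega
  · simp only [count_append, count_cons_of_ne hy, count_nil] at this
    exact ⟨by omega, hy⟩

end List

open List

section Positions

theorem substr_append_append (U V R : List α) :
    substr (U ++ V ++ R) (U.length + 1) (U.length + V.length) = V := by
  simp [substr, drop_left', show U.length + V.length + 1 - (U.length + 1) = V.length by omega]

variable [DecidableEq α]

theorem nthOccPos_append_cons (G H : List α) (σ : α) :
    NthOccPos (G ++ σ :: H) σ (G.count σ + 1) (G.length + 1) := by
  refine ⟨by omega, by simp, ?_, ?_⟩
  · simpa using substr_append_append G [σ] H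
  · simpa using congrArg (count σ) (substr_append_append [] G (σ :: H))

theorem NthOccPos.exists_eq_append_cons {S : List α} {σ : α} {t p : ℕ}
    (h : NthOccPos S σ t p) : ∃ G H, S = G ++ σ :: H ∧ G.count σ = t - 1 ∧ p = G.length + 1 := by
  obtain ⟨hp₁, hp, hσ, hc⟩ := h
  have hd : S.drop (p - 1) = σ :: S.drop p := by
    rw [drop_eq_getElem_cons (by omega), show p - 1 + 1 = p by omega]
    rw [substr, drop_eq_getElem_cons (by omega), show p + 1 - p = 1 by omega] at hσ
    rw [(cons_eq_cons.1 hσ).1]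
  refine ⟨S.take (p - 1), S.drop p, by rw [← hd, take_append_drop], ?_, by rw [length_take]; omega⟩
  simpa [substr] using hc

theorem NthOccPos.unique {S : List α} {σ : α} {t p q : ℕ} (hp : NthOccPos S σ t p)
    (hq : NthOccPos S σ t q) : p = q := by
  obtain ⟨G, H, rfl, hG, rfl⟩ := hp.exists_eq_append_cons
  obtain ⟨G', H', hS, hG', rfl⟩ := hq.exists_eq_append_cons
  rw [(append_cons_inj_of_count_eq hS (hG.trans hG'.symm)).1]

theorem NthOccPos.substr_eq_cons {S G H : List α} {σ : α} {i : ℕ} (hi : NthOccPos S σ 1 i)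
    (hS : S = G ++ σ :: H) (hG : σ ∈ G) :
    ∃ U M, G = U ++ σ :: M ∧ σ ∉ U ∧ substr S i G.length = σ :: M := by
  obtain ⟨U, M, hU, rfl, -⟩ := exists_erase_eq hG
  refine ⟨U, M, rfl, hU, ?_⟩
  subst hS
  have hi' := nthOccPos_append_cons U (M ++ σ :: H) σ
  rw [count_eq_zero.2 hU, zero_add, ← cons_append, ← append_assoc] at hi'
  rw [hi.unique hi']
  simpa using substr_append_append U (σ :: M) (σ :: H)

theorem NthOccPos.sublist_cons_of_sublist_substr {S W A B : List α} {σ : α} {i k p : ℕ}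
    (hi : NthOccPos S σ 1 i) (hp : NthOccPos S σ k p) (hk : 2 ≤ k)
    (hW : W <+ substr S i (p - 1)) (hWc : k - 1 ≤ W.count σ) (hWZ : W <+ A ++ σ :: B)
    (hA : σ ∉ A) : W <+ σ :: B := by
  obtain ⟨G, H, hS, hG, rfl⟩ := hp.exists_eq_append_cons
  obtain ⟨U, M, rfl, hU, hT⟩ := hi.substr_eq_cons hS (count_pos_iff.1 (by omega))
  rw [Nat.add_sub_cancel, hT] at hW
  simp only [count_append, count_cons_self, count_eq_zero.2 hU] at hG
  exact sublist_cons_of_count_lt hWZ hA hW (by omega)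

theorem NthOccPos.exists_cut_of_append_append_sublist {S A B : List α} {σ y : α} {i : ℕ}
    (hi : NthOccPos S σ 1 i) (h : A ++ σ :: B ++ [y] ++ (A ++ σ :: B) ++ [y] <+ S) :
    ∃ M H p, NthOccPos S σ (M.count σ + 2) p ∧ substr S i (p - 1) = σ :: M ∧
      substr S p S.length = σ :: H ∧ S.count σ = M.count σ + H.count σ + 2 ∧
      σ :: B ++ [y] <+ σ :: M ∧ σ :: B ++ [y] <+ σ :: H := by
  obtain ⟨G, H, hS, hAG, hBH⟩ := exists_eq_append_cons_of_append_cons_sublist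
    (l := A ++ σ :: (B ++ y :: A)) (l' := B ++ [y]) (by simpa using h)
  obtain ⟨U, M, rfl, hU, hT₁⟩ := hi.substr_eq_cons hS (hAG.subset (by simp))
  refine ⟨M, H, (U ++ σ :: M).length + 1, ?_, hT₁, ?_, ?_, ?_, hBH.cons_cons σ⟩
  · simpa [hS, count_eq_zero.2 hU] using nthOccPos_append_cons (U ++ σ :: M) H σ
  · have := substr_append_append (U ++ σ :: M) (σ :: H) []
    rwa [append_nil, ← length_append, ← hS] at this
  · simp only [hS, count_append, count_cons_self, count_eq_zero.2 hU]
    omega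
  · have := cons_sublist_of_cons_sublist_append ((sublist_append_right A _).trans hAG) hU
    exact ((sublist_append_left (B ++ [y]) A).cons_cons σ).trans (by simpa using this)

end Positions

theorem IsMCSContaining.not_append_singleton_sublist_of_sublist {T₁ T₂ X W C : List α} {y : α}
    (hW : IsMCSContaining T₁ T₂ X W) (hWC : W <+ C) (h₁ : C ++ [y] <+ T₁) :
    ¬ C ++ [y] <+ T₂ := by
  intro h₂
  have hlen := congrArg length (hW.2.2.2 _ (hWC.trans (sublist_append_left C [y])) h₁ h₂)
  have := hWC.length_le
  simp only [length_append, length_singleton] at hlen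
  omega

/-- If `σ` occurs exactly `ℓ ≥ 2` times in `S` and `Y` is an Algorithm-1
output for `S` and `σ`, then every square subsequence `ZZ` of `S` containing `YY` is not
right-extendable in `S`. -/
theorem alg1_output_not_rightExtendable {α : Type*} [DecidableEq α] (S : List α) (σ : α)
    (hℓ : 2 ≤ S.count σ) (Y : List α) (hY : Alg1Output S σ Y) :
    ∀ Z : List α, Z ++ Z <+ S → Y ++ Y <+ Z ++ Z → ¬ RightExtendable S Z := by
  rintro Z - hYY ⟨y, hy⟩
  obtain ⟨i1, ie1, Y₀, hi1, hie1, hmcs, hcase⟩ := hY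
  set e := S.count σ / 2
  have hYZ := sublist_of_append_self_sublist_append_self hYY
  have hY₀Y : Y₀ <+ Y := by
    rcases hcase with ⟨rfl, -⟩ | ⟨-, _, _, _, h⟩
    exacts [Sublist.refl _, h.1]
  have hY₀e : e ≤ Y₀.count σ := by simpa using hmcs.1.count_le σ
  obtain ⟨hZe, hyσ⟩ :=
    count_eq_half_of_append_append_sublist hy (hY₀e.trans ((hY₀Y.trans hYZ).count_le σ))
  obtain ⟨A, B, hA, rfl, -⟩ := exists_erase_eq (count_pos_iff.1 (by omega) : σ ∈ Z)
  have hY₀B : Y₀ <+ σ :: B := hi1.sublist_cons_of_sublist_substr hie1 (by omega) hmcs.2.1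
    (by omega) (hY₀Y.trans hYZ) hA
  obtain ⟨M, H, p, hp, hT₁, hT₂, hcount, hC₁, hC₂⟩ := hi1.exists_cut_of_append_append_sublist hy
  have hBM := hC₁.count_le σ
  have hBH := hC₂.count_le σ
  simp only [count_append, count_cons_self, count_cons_of_ne hyσ, count_nil,
    count_eq_zero.2 hA] at hBM hBH hZe
  by_cases hMe : M.count σ + 1 = e
  · obtain rfl := hie1.unique (by convert hp using 1; omega)
    rw [hT₁, hT₂] at hmcs
    exact hmcs.not_append_singleton_sublist_of_sublist hY₀B hC₁ hC₂
  have hodd : Odd (S.count σ) := ⟨e, by omega⟩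
  rcases hcase with ⟨rfl, hY₀⟩ | ⟨-, ie2, hie2, -, hmcs₂⟩
  · exact hY₀ hodd p (by convert hp using 1; omega)
      (hT₂ ▸ hY₀B.trans ((sublist_append_left _ _).trans hC₂))
  · obtain rfl := hie2.unique (by convert hp using 1; omega)
    rw [hT₁, hT₂] at hmcs₂
    have hYB : Y <+ σ :: B :=
      sublist_cons_of_count_lt hYZ hA hmcs₂.2.2.1 (by have := hY₀Y.count_le σ; omega)
    exact hmcs₂.not_append_singleton_sublist_of_sublist hYB hC₁ hC₂
end

section
/- Let S be a string in which the character σ occurs exactly ℓ ≥ 2 times, and let Y be an Algorithm-1 output for S and σ. Then the square subsequence YY of S is not inner-extendable; that is, there are no character y and nonempty strings Y₁, Y₂ with Y = Y₁Y₂ such that Y₁yY₂Y₁yY₂ is a subsequence of S. -/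
/-!
Let `e = ⌊ℓ/2⌋`. The output `Y` starts with `σ` and contains `σ` exactly `e` times, because it
lies in a window of `S` that starts at an occurrence of `σ` and contains exactly `e` of them.
An inner extension gives `V = Y₁ y Y₂`, which is one letter longer than `Y`, contains `Y`, starts
with `σ`, and has `VV ⊆ S`. Cut `S` between the two copies of `V`. Each side then holds at least
`e` occurrences of `σ`, so the left side holds `e` or (for odd `ℓ`) `e + 1` of them. Since `V`
starts with `σ`, `V` is then a subsequence of both windows determined by the `(e+1)`-th or
`(e+2)`-th occurrence. So `V` is a longer common subsequence, which contradicts the maximality of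
`Y₀` or of `Y`, or else it violates the test that made Algorithm 1 return `Y₀`.
-/

open List

variable {α : Type*}

theorem substr_append_length (A B : List α) :
    substr (A ++ B) (A.length + 1) (A ++ B).length = B := by
  simp [substr]

theorem substr_append_append_s12 (A C D : List α) :
    substr (A ++ (C ++ D)) (A.length + 1) (A.length + C.length) = C := by
  simp [substr, show A.length + C.length + 1 - (A.length + 1) = C.length by omega]

theorem IsMCSContaining.length_le {T₁ T₂ X W V : List α} (h : IsMCSContaining T₁ T₂ X W)
    (hWV : W <+ V) (h₁ : V <+ T₁) (h₂ : V <+ T₂) : V.length ≤ W.length := by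
  rw [h.2.2.2 V hWV h₁ h₂]

theorem InnerExtendable.exists_longer_square {S Yt : List α} {a : α}
    (h : InnerExtendable S (a :: Yt)) :
    ∃ V, a :: Yt <+ a :: V ∧ Yt.length < V.length ∧ (a :: V) ++ (a :: V) <+ S := by
  obtain ⟨y, _ | ⟨b, Y₁⟩, Y₂, hY, hY₁, -, hsub⟩ := h
  · exact absurd rfl hY₁
  obtain ⟨rfl, rfl⟩ := List.cons.inj hY
  refine ⟨Y₁ ++ y :: Y₂, ?_, by simp, by simpa using hsub⟩
  simp only [List.cons_sublist_cons]
  exact (List.sublist_cons_self y Y₂).append_left Y₁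

section

variable [DecidableEq α] {S : List α} {a : α} {t i p : ℕ}

theorem cons_sublist_of_cons_sublist_append {l P Q : List α} (hP : P.count a = 0)
    (h : a :: l <+ P ++ Q) : a :: l <+ Q := by
  induction P with
  | nil => exact h
  | cons x P ih =>
    have hx : x ≠ a := by rintro rfl; simp at hP
    rcases List.sublist_cons_iff.mp h with h | ⟨r, hr, -⟩
    · exact ih (by simpa [List.count_cons, hx] using hP) h
    · exact absurd (List.cons.inj hr).1.symm hx

theorem prefix_of_append_eq_append_cons {S₁ S₂ A B : List α}
    (h : S₁ ++ S₂ = A ++ a :: B) (hc : S₁.count a ≤ A.count a) : S₁ <+: A := by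
  rcases List.append_eq_append_iff.mp h with ⟨M, hA, -⟩ | ⟨M, rfl, hM⟩
  · exact ⟨M, hA.symm⟩
  · obtain rfl | ⟨M', rfl, -⟩ := (List.append_eq_cons_iff.mp hM.symm).imp_left And.left
    · simp
    · simp at hc

theorem cons_sublist_of_append_eq_append_cons {l S₁ S₂ A B : List α}
    (h : S₁ ++ S₂ = A ++ a :: B) (hc : A.count a ≤ S₁.count a) (hl : a :: l <+ S₂) :
    a :: l <+ a :: B := by
  rcases List.append_eq_append_iff.mp h with ⟨M, rfl, rfl⟩ | ⟨M, -, hM⟩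
  · exact cons_sublist_of_cons_sublist_append (by simp at hc; omega) hl
  · exact hl.trans (hM ▸ List.sublist_append_right M S₂)

theorem exists_eq_append_cons_of_lt_count {n : ℕ} {l : List α} (h : n < l.count a) :
    ∃ A B, l = A ++ a :: B ∧ A.count a = n := by
  induction l generalizing n with
  | nil => simp at h
  | cons x l ih =>
    by_cases hx : x = a
    · subst hx
      cases n with
      | zero => exact ⟨[], l, rfl, rfl⟩
      | succ n =>
        obtain ⟨A, B, rfl, hA⟩ := ih (n := n) (by simpa using h)
        exact ⟨x :: A, B, rfl, by simp [hA]⟩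
    · obtain ⟨A, B, rfl, hA⟩ := ih (by simpa [List.count_cons, hx] using h)
      exact ⟨x :: A, B, rfl, by simp [hx, hA]⟩

theorem List.Sublist.exists_eq_cons_of_count_le {l r : List α} (h : l <+ a :: r)
    (hc : (a :: r).count a ≤ l.count a) : ∃ l', l = a :: l' := by
  rcases List.sublist_cons_iff.mp h with h | ⟨l', rfl, -⟩
  · have := h.count_le a
    simp at hc
    omega
  · exact ⟨l', rfl⟩

theorem nthOccPos_append_cons_s12 (A B : List α) (a : α) :
    NthOccPos (A ++ a :: B) a (A.count a + 1) (A.length + 1) := by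
  refine ⟨by omega, by simp, by simp [substr], ?_⟩
  simp [substr]

theorem NthOccPos.exists_eq_append_cons_s12 (h : NthOccPos S a t p) :
    ∃ A B, S = A ++ a :: B ∧ A.count a = t - 1 ∧ p = A.length + 1 := by
  obtain ⟨hp, -, hσ, hcount⟩ := h
  obtain ⟨B, hB⟩ : ∃ B, S.drop (p - 1) = a :: B := by
    simp only [substr, show p + 1 - p = 1 by omega] at hσ
    cases hd : S.drop (p - 1) with
    | nil => simp [hd] at hσ
    | cons x B => simp_all
  have hlen : (S.take (p - 1)).length = p - 1 := by
    have := congrArg List.length hB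
    simp at this ⊢
    omega
  refine ⟨S.take (p - 1), B, by rw [← hB, List.take_append_drop], ?_, by omega⟩
  simpa [substr] using hcount

theorem exists_nthOccPos {n : ℕ} (h : n < S.count a) : ∃ p, NthOccPos S a (n + 1) p := by
  obtain ⟨A, B, rfl, rfl⟩ := exists_eq_append_cons_of_lt_count h
  exact ⟨_, nthOccPos_append_cons_s12 A B a⟩

theorem NthOccPos.exists_window (hi : NthOccPos S a 1 i) (hp : NthOccPos S a t p) (ht : 2 ≤ t) :
    ∃ P T B, S = P ++ a :: T ++ a :: B ∧ P.count a = 0 ∧ (a :: T).count a + 1 = t ∧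
      (a :: T).count a + (a :: B).count a = S.count a ∧
      substr S i (p - 1) = a :: T ∧ substr S p S.length = a :: B := by
  obtain ⟨P, M, rfl, hP, rfl⟩ := hi.exists_eq_append_cons_s12
  obtain ⟨A, B, hS, hA, rfl⟩ := hp.exists_eq_append_cons_s12
  rcases List.append_eq_append_iff.mp hS with ⟨N, rfl, hN⟩ | ⟨N, rfl, -⟩
  swap
  · simp at hP
    omega
  obtain ⟨T, rfl⟩ : ∃ T, N = a :: T := by
    rcases List.append_eq_cons_iff.mp hN.symm with ⟨rfl, -⟩ | ⟨T, rfl, -⟩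
    · simp at hA hP
      omega
    · exact ⟨T, rfl⟩
  obtain rfl : M = T ++ a :: B := by simpa using hN
  refine ⟨P, T, B, by simp, hP, ?_, by simp [hP]; omega, ?_, ?_⟩
  · simp at hA ⊢
    omega
  · simpa using substr_append_append_s12 P (a :: T) (a :: B)
  · simpa using substr_append_length (P ++ a :: T) (a :: B)

theorem cons_sublist_substr_of_append_eq {S₁ S₂ V : List α} (hi : NthOccPos S a 1 i)
    (hp : NthOccPos S a t p) (ht : S₁.count a + 1 = t) (hS : S₁ ++ S₂ = S)
    (h₁ : a :: V <+ S₁) (h₂ : a :: V <+ S₂) :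
    a :: V <+ substr S i (p - 1) ∧ a :: V <+ substr S p S.length := by
  have := h₁.count_le a
  obtain ⟨P, T, B, hSeq, hP, hT, -, hL, hR⟩ := hi.exists_window hp (by simp at this; omega)
  have hcount : S₁.count a = (P ++ a :: T).count a := by
    simp [List.count_append, hP] at hT ⊢
    omega
  rw [hSeq] at hS
  rw [hL, hR]
  refine ⟨cons_sublist_of_cons_sublist_append hP ?_,
    cons_sublist_of_append_eq_append_cons hS hcount.ge h₂⟩
  exact h₁.trans (prefix_of_append_eq_append_cons hS hcount.le).sublist

theorem exists_split_of_append_self_sublist {W : List α} (h : W ++ W <+ S)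
    (hW : S.count a / 2 ≤ W.count a) :
    ∃ S₁ S₂, S₁ ++ S₂ = S ∧ W <+ S₁ ∧ W <+ S₂ ∧
      (S₁.count a = S.count a / 2 ∨ Odd (S.count a) ∧ S₁.count a = S.count a / 2 + 1) := by
  obtain ⟨S₁, S₂, rfl, h₁, h₂⟩ := List.append_sublist_iff.mp h
  refine ⟨S₁, S₂, rfl, h₁, h₂, ?_⟩
  have := h₁.count_le a
  have := h₂.count_le a
  rw [Nat.odd_iff]
  simp only [List.count_append] at hW ⊢
  omega

theorem Alg1Output.exists_eq_cons {Y : List α} {σ : α}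
    (hℓ : 2 ≤ S.count σ) (hY : Alg1Output S σ Y) :
    ∃ Yt, Y = σ :: Yt ∧ S.count σ / 2 ≤ Y.count σ := by
  obtain ⟨i1, ie1, Y₀, hi1, hie1, hmcs₀, hcase⟩ := hY
  have hY₀ : S.count σ / 2 ≤ Y₀.count σ := by simpa using hmcs₀.1.count_le σ
  rcases hcase with ⟨rfl, -⟩ | ⟨hodd, ie2, hie2, -, hmcs⟩
  · obtain ⟨P, T, B, -, -, hT, -, hL, -⟩ := hi1.exists_window hie1 (by omega)
    obtain ⟨Yt, rfl⟩ := (hL ▸ hmcs₀.2.1).exists_eq_cons_of_count_le (by omega)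
    exact ⟨Yt, rfl, hY₀⟩
  · have hYcount := hY₀.trans (hmcs.1.count_le σ)
    obtain ⟨P, T, B, -, -, hT, hTB, -, hR⟩ := hi1.exists_window hie2 (by omega)
    have := Nat.odd_iff.mp hodd
    obtain ⟨Yt, rfl⟩ := (hR ▸ hmcs.2.2.1).exists_eq_cons_of_count_le (by omega)
    exact ⟨Yt, rfl, hYcount⟩

end

/-- If `σ` occurs exactly `ℓ ≥ 2` times in `S` and `Y` is an Algorithm-1
output for `S` and `σ`, then the square subsequence `YY` of `S` is not inner-extendable. -/
theorem alg1_output_not_innerExtendable {α : Type*} [DecidableEq α] (S : List α) (σ : α)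
    (hℓ : 2 ≤ S.count σ) (Y : List α) (hY : Alg1Output S σ Y) :
    ¬ InnerExtendable S Y := by
  intro hext
  obtain ⟨Yt, rfl, hYt⟩ := hY.exists_eq_cons hℓ
  obtain ⟨V, hYV, hlen, hsq⟩ := hext.exists_longer_square
  obtain ⟨S₁, S₂, hS, h₁, h₂, hS₁⟩ :=
    exists_split_of_append_self_sublist hsq (hYt.trans (hYV.count_le σ))
  replace hlen : (σ :: Yt).length < (σ :: V).length := by simpa using hlen
  obtain ⟨i1, ie1, Y₀, hi1, hie1, hmcs₀, hcase⟩ := hY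
  rcases hcase with ⟨rfl, hclause⟩ | ⟨hodd, ie2, hie2, -, hmcs⟩ <;>
    rcases hS₁ with hS₁ | ⟨hodd', hS₁⟩
  · obtain ⟨hL, hR⟩ := cons_sublist_substr_of_append_eq hi1 hie1 (by omega) hS h₁ h₂
    exact absurd (hmcs₀.length_le hYV hL hR) hlen.not_ge
  · have := Nat.odd_iff.mp hodd'
    obtain ⟨ie2, hie2⟩ :=
      exists_nthOccPos (S := S) (a := σ) (n := S.count σ / 2 + 1) (by omega)
    exact hclause hodd' ie2 hie2
      (hYV.trans (cons_sublist_substr_of_append_eq hi1 hie2 (by omega) hS h₁ h₂).2)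
  · obtain ⟨hL, hR⟩ := cons_sublist_substr_of_append_eq hi1 hie1 (by omega) hS h₁ h₂
    exact absurd (hmcs₀.length_le (hmcs.1.trans hYV) hL hR)
      (hmcs.1.length_le.trans_lt hlen).not_ge
  · obtain ⟨hL, hR⟩ := cons_sublist_substr_of_append_eq hi1 hie2 (by omega) hS h₁ h₂
    exact absurd (hmcs.length_le hYV hL hR) hlen.not_ge
end

section
/- Let S, Y and Z be strings such that ZZ is a subsequence of S, YY is a subsequence of ZZ, the square subsequence YY is not right-extendable in S, and YY is not inner-extendable in S. Then Y is a suffix of Z; that is, Z = Z₁Y for some string Z₁. -/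
open List

variable {α : Type*}

lemma aux_suffix_or_ext : ∀ (Z Y : List α), Y <+ Z →
    (∃ Z₁, Z = Z₁ ++ Y) ∨ (∃ y, Y ++ [y] <+ Z) ∨
    (∃ y Y₁ Y₂, Y = Y₁ ++ Y₂ ∧ Y₁ ≠ [] ∧ Y₂ ≠ [] ∧ Y₁ ++ [y] ++ Y₂ <+ Z)
  | [], Y, h => by
    left; exact ⟨[], by simpa using (List.sublist_nil.mp h).symm⟩
  | z :: Z', Y, h => by
    match Y, h with
    | [], _ => exact .inl ⟨z :: Z', by simp⟩
    | Y, .cons _ (h' : Y <+ Z') =>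
      rcases aux_suffix_or_ext Z' Y h' with ⟨Z₁, rfl⟩ | ⟨y, hy⟩ | ⟨y, Y₁, Y₂, rfl, h1, h2, hy⟩
      · exact .inl ⟨z :: Z₁, rfl⟩
      · exact .inr (.inl ⟨y, hy.cons z⟩)
      · exact .inr (.inr ⟨y, Y₁, Y₂, rfl, h1, h2, hy.cons z⟩)
    | a :: Y', .cons₂ _ (h' : Y' <+ Z') =>
      rcases aux_suffix_or_ext Z' Y' h' with ⟨Z₁, rfl⟩ | ⟨y, hy⟩ | ⟨y, Y₁, Y₂, rfl, h1, h2, hy⟩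
      · match Z₁ with
        | [] => exact .inl ⟨[], by simp⟩
        | b :: Z₁' =>
          match Y' with
          | [] => exact .inr (.inl ⟨b, by simp⟩)
          | c :: Y'' =>
            refine .inr (.inr ⟨b, [a], c :: Y'', rfl, by simp, by simp, ?_⟩)
            simpa using ((List.sublist_append_right Z₁' _).cons₂ b).cons₂ a
      · exact .inr (.inl ⟨y, by simpa using hy.cons₂ a⟩)
      · refine .inr (.inr ⟨y, a :: Y₁, Y₂, rfl, by simp, h2, ?_⟩)
        simpa using hy.cons₂ a

/-- If `ZZ ⊆ S`, `YY ⊆ ZZ`, and `YY` is neither right- nor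
inner-extendable in `S`, then `Y` is a suffix of `Z`, i.e. `Z = Z₁Y`. -/
theorem suffix_of_not_right_inner_extendable {α : Type*} (S Y Z : List α)
    (hZ : Z ++ Z <+ S) (hYZ : Y ++ Y <+ Z ++ Z)
    (hR : ¬ RightExtendable S Y) (hI : ¬ InnerExtendable S Y) :
    ∃ Z₁ : List α, Z = Z₁ ++ Y := by
  have hYsubZ : Y <+ Z := by
    obtain ⟨U, V, hUV, hU, hV⟩ := List.sublist_append_iff.mp hYZ
    rcases le_or_gt Y.length U.length with hle | hlt
    · exact (List.prefix_of_prefix_length_le ⟨Y, rfl⟩ ⟨V, hUV.symm⟩ hle).sublist.trans hU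
    · have hlen : U.length + V.length = Y.length + Y.length := by
        have := congrArg List.length hUV; simpa using this.symm
      have hle : Y.length ≤ V.length := by omega
      exact (List.suffix_of_suffix_length_le ⟨Y, rfl⟩ ⟨U, hUV.symm⟩ hle).sublist.trans hV
  rcases aux_suffix_or_ext Z Y hYsubZ with h | ⟨y, hy⟩ | ⟨y, Y₁, Y₂, hsplit, h1, h2, hy⟩
  · exact h
  · exact absurd ⟨y, by simpa [List.append_assoc] using (hy.append hy).trans hZ⟩ hR
  · exact absurd ⟨y, Y₁, Y₂, hsplit, h1, h2, by
      simpa [List.append_assoc] using (hy.append hy).trans hZ⟩ hI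
end

section
/- Let S be a string in which the character σ occurs exactly ℓ ≥ 2 times, let Y be an Algorithm-1 output for S and σ, and let Z be an Algorithm-2 output for S and σ built from Y. Then the square subsequence ZZ of S is not inner-extendable; that is, there are no character y and nonempty strings Z₁, Z₂ with Z = Z₁Z₂ such that Z₁yZ₂Z₁yZ₂ is a subsequence of S. -/
open List

variable {α : Type*}

/-!
Suppose `Z = Z₁Z₂` and `Z' = Z₁yZ₂` with `Z'Z' ⊆ S`, and let `e = ⌊ℓ/2⌋`. The Algorithm-1 output
`Y` starts with `σ` and contains `σ^e`, so the suffix `W` of `Z'` from its first `σ` on contains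
`Y`, and `WW ⊆ S`. Counting occurrences of `σ`, the two copies of `W` are separated by the
`(e+1)`-st or the `(e+2)`-nd occurrence of `σ`, and maximality in Algorithm 1 forces `W = Y`.
Counting once more, the first copy of `Z' = AY` places `Y` after the first or the second
occurrence of `σ`, so `Z'` is a common subsequence of the two sides of the cut at `j₁` or `j₂`;
maximality in Algorithm 2 then forces `Z' = Z`, although `|Z'| = |Z| + 1`.
-/

namespace List

theorem Sublist.of_cons_append_of_notMem {a : α} {V A L : List α} (hA : a ∉ A)
    (h : a :: V <+ A ++ L) : a :: V <+ L := by
  obtain ⟨_ | ⟨b, l₁⟩, l₂, hl, h₁, h₂⟩ := sublist_append_iff.1 h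
  · simpa [hl] using h₂
  · obtain ⟨rfl, -⟩ := cons.inj hl
    exact absurd (h₁.subset mem_cons_self) hA

theorem exists_eq_append_cons_of_append_cons_sublist_s15 {a : α} {A V T : List α}
    (h : A ++ a :: V <+ T) : ∃ P Q, T = P ++ a :: Q ∧ A <+ P ∧ V <+ Q := by
  obtain ⟨r₁, r₂, rfl, hA, haV⟩ := append_sublist_iff.1 h
  obtain ⟨u, v, rfl, ha, hV⟩ := cons_sublist_iff.1 haV
  obtain ⟨s, t, rfl⟩ := append_of_mem ha
  exact ⟨r₁ ++ s, t ++ v, by simp, hA.trans (sublist_append_left _ _),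
    hV.trans (sublist_append_right _ _)⟩

theorem exists_sublist_take_sublist_drop {A B S : List α} (h : A ++ B <+ S) :
    ∃ m ≤ S.length, A <+ S.take m ∧ B <+ S.drop m := by
  obtain ⟨S₁, S₂, rfl, h₁, h₂⟩ := append_sublist_iff.1 h
  exact ⟨S₁.length, by simp, by simpa using h₁, by simpa using h₂⟩

end List

section Substr

variable {S : List α}

theorem substr_one (S : List α) (j : ℕ) : substr S 1 j = S.take j := by
  simp [substr]

theorem substr_length (S : List α) (a : ℕ) : substr S a S.length = S.drop (a - 1) :=
  take_of_length_le (by simp; omega)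

theorem substr_sublist_substr {a b a' b' : ℕ} (ha' : 1 ≤ a') (ha : a' ≤ a) (hb : b ≤ b') :
    substr S a b <+ substr S a' b' := by
  rcases Nat.lt_or_ge (b + 1) a with hab | hab
  · simp [substr, Nat.sub_eq_zero_of_le hab.le]
  have hdrop : S.drop (a - 1) = (S.drop (a' - 1)).drop (a - a') := by
    rw [drop_drop]; congr 1; omega
  calc substr S a b = ((S.drop (a' - 1)).drop (a - a')).take (b + 1 - a) := by rw [substr, hdrop]
    _ <+ ((S.drop (a' - 1)).take (a - a' + (b + 1 - a))) := by
        rw [take_add]; exact sublist_append_right _ _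
    _ <+ substr S a' b' := take_sublist_take_left (by omega)

theorem take_pred_append_substr {i j : ℕ} (hi : 1 ≤ i) (hij : i ≤ j + 1) :
    S.take (i - 1) ++ substr S i j = S.take j := by
  rw [substr, ← take_add]; congr 1; omega

theorem le_of_sublist_substr {Y : List α} {i j : ℕ} (hY : Y ≠ []) (h : Y <+ substr S i j) :
    i ≤ j := by
  by_contra! hji
  simp [substr, Nat.sub_eq_zero_of_le (show j + 1 ≤ i by omega)] at h
  exact hY h

end Substr

namespace NthOccPos

variable [DecidableEq α] {S : List α} {σ : α} {t p : ℕ}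

theorem drop_pred_eq_cons (h : NthOccPos S σ t p) : S.drop (p - 1) = σ :: S.drop p := by
  obtain ⟨hp, -, hσ, -⟩ := h
  rw [substr, show p + 1 - p = 1 by omega] at hσ
  rw [show S.drop p = (S.drop (p - 1)).drop 1 by rw [drop_drop]; congr 1; omega]
  generalize S.drop (p - 1) = D at hσ ⊢
  rcases D with _ | ⟨b, T⟩ <;> simp_all

theorem count_take_pred (h : NthOccPos S σ t p) : (S.take (p - 1)).count σ = t - 1 := by
  simpa [substr_one] using h.2.2.2

theorem count_take (h : NthOccPos S σ t p) : (S.take p).count σ = t - 1 + 1 := by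
  have hp : p = p - 1 + 1 := by have := h.1; omega
  rw [hp, take_add, h.drop_pred_eq_cons, count_append, h.count_take_pred]
  simp

theorem unique_s15 {p' : ℕ} (h : NthOccPos S σ t p) (h' : NthOccPos S σ t p') : p = p' := by
  have hnlt : ∀ q q', NthOccPos S σ t q → NthOccPos S σ t q' → ¬ q < q' := by
    intro q q' hq hq' hlt
    have := (take_sublist_take_left (l := S) (show q ≤ q' - 1 by omega)).count_le σ
    rw [hq.count_take, hq'.count_take_pred] at this
    omega
  exact le_antisymm (not_lt.1 (hnlt _ _ h' h)) (not_lt.1 (hnlt _ _ h h'))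

theorem lt_of_count_take_lt {m : ℕ} (h : NthOccPos S σ t p) (hm : (S.take m).count σ < t) :
    m < p := by
  by_contra! hpm
  have := (take_sublist_take_left (l := S) hpm).count_le σ
  rw [h.count_take] at this
  omega

theorem first_le {i : ℕ} (hi : NthOccPos S σ 1 i) (h : NthOccPos S σ t p) : i ≤ p := by
  by_contra! hpi
  have := (take_sublist_take_left (l := S) (show p ≤ i - 1 by omega)).count_le σ
  rw [h.count_take, hi.count_take_pred] at this
  omega

theorem substr_eq_cons_s15 {b : ℕ} (h : NthOccPos S σ t p) (hb : p ≤ b) :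
    ∃ T, substr S p b = σ :: T := by
  rw [substr, h.drop_pred_eq_cons, show b + 1 - p = b - p + 1 by omega]
  exact ⟨_, rfl⟩

end NthOccPos

theorem nthOccPos_append_cons_s15 [DecidableEq α] (P Q : List α) (σ : α) :
    NthOccPos (P ++ σ :: Q) σ (P.count σ + 1) (P.length + 1) := by
  refine ⟨by omega, by simp, ?_, ?_⟩ <;> simp [substr]

section Copies

variable [DecidableEq α] {S A V : List α} {σ : α} {m : ℕ}

theorem exists_nthOccPos_of_sublist_take (hm : m ≤ S.length) (h : A ++ σ :: V <+ S.take m) :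
    ∃ p, NthOccPos S σ ((S.take (p - 1)).count σ + 1) p ∧ A <+ S.take (p - 1) ∧
      σ :: V <+ substr S p m ∧
      (S.take (p - 1)).count σ + (σ :: V).count σ ≤ (S.take m).count σ := by
  obtain ⟨P, Q, hPQ, hAP, hVQ⟩ := exists_eq_append_cons_of_append_cons_sublist_s15 h
  obtain ⟨R, rfl⟩ : ∃ R, S = P ++ σ :: Q ++ R := ⟨S.drop m, by rw [← hPQ, take_append_drop]⟩
  obtain rfl : m = P.length + Q.length + 1 := by
    have := congrArg length hPQ
    simp only [length_take, length_append, length_cons] at this hm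
    omega
  refine ⟨P.length + 1, ?_, ?_, ?_, ?_⟩
  · simpa using nthOccPos_append_cons_s15 P (Q ++ R) σ
  · simpa using hAP
  · simpa [substr, show P.length + Q.length + 1 + 1 - (P.length + 1) = Q.length + 1 by omega]
      using hVQ
  · rw [hPQ]
    simpa using hVQ.count_le σ

theorem exists_nthOccPos_of_sublist_drop (h : A ++ σ :: V <+ S.drop m) :
    ∃ p, NthOccPos S σ ((S.take (p - 1)).count σ + 1) p ∧ m < p ∧
      σ :: V <+ substr S p S.length ∧
      (S.take (p - 1)).count σ + (σ :: V).count σ ≤ S.count σ := by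
  obtain ⟨P, Q, hPQ, -, hVQ⟩ := exists_eq_append_cons_of_append_cons_sublist_s15 h
  have hm : m ≤ S.length := by
    by_contra! hm
    simp [drop_eq_nil_of_le hm.le] at hPQ
  obtain ⟨L, hL, rfl⟩ : ∃ L, m ≤ L.length ∧ S = L ++ σ :: Q :=
    ⟨S.take m ++ P, by simp [hm], by rw [append_assoc, ← hPQ, take_append_drop]⟩
  refine ⟨L.length + 1, ?_, by omega, ?_, ?_⟩
  · simpa using nthOccPos_append_cons_s15 L Q σ
  · rw [substr_length]
    simpa using hVQ
  · simpa using hVQ.count_le σ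

end Copies

theorem IsMCSContaining.exists_eq_cons {σ : α} {T₁ T₂ X W : List α}
    (h : IsMCSContaining (σ :: T₁) (σ :: T₂) X W) : ∃ W', W = σ :: W' := by
  obtain ⟨-, h₁, h₂, hmax⟩ := h
  by_contra! hW
  have htail : ∀ {T : List α}, W <+ σ :: T → W <+ T := fun hT =>
    (sublist_cons_iff.1 hT).resolve_right fun ⟨r, hr, _⟩ => hW r hr
  have := hmax (σ :: W) (sublist_cons_self σ W) ((htail h₁).cons_cons σ)
    ((htail h₂).cons_cons σ)
  simpa using congrArg length this

theorem exists_leftmostAnchor {S Y : List α} {i m : ℕ} (h : Y <+ substr S i m) :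
    ∃ j, LeftmostAnchor S Y i j := by
  classical
  have hex : ∃ j, Y <+ substr S i j := ⟨m, h⟩
  exact ⟨Nat.find hex, Nat.find_spec hex, fun _ hj => Nat.find_min' hex hj⟩

theorem LeftmostAnchor.append_sublist_split {S A Y : List α} {p j m : ℕ}
    (hj : LeftmostAnchor S Y p j) (hY : Y ≠ []) (hp : 1 ≤ p) (hA : A <+ S.take (p - 1))
    (hYm : Y <+ substr S p m) (hdrop : A ++ Y <+ S.drop m) :
    A ++ Y <+ substr S 1 j ∧ A ++ Y <+ substr S (j + 1) S.length := by
  have hjm := hj.2 m hYm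
  have hpj := le_of_sublist_substr hY hj.1
  constructor
  · rw [substr_one, ← take_pred_append_substr hp (by omega)]
    exact hA.append hj.1
  · rw [substr_length, Nat.add_sub_cancel]
    exact hdrop.trans (drop_sublist_drop_left S hjm)

section Windows

variable [DecidableEq α] {S : List α} {σ : α} {i : ℕ}

theorem exists_eq_cons_of_isMCSContaining_substr {q t : ℕ} {X W : List α}
    (hi : NthOccPos S σ 1 i) (hq : NthOccPos S σ t q) (ht : 1 < t)
    (hW : IsMCSContaining (substr S i (q - 1)) (substr S q S.length) X W) :
    ∃ W', W = σ :: W' := by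
  have hiq : i < q := hq.lt_of_count_take_lt (by rw [hi.count_take]; omega)
  obtain ⟨T₁, hT₁⟩ := hi.substr_eq_cons_s15 (show i ≤ q - 1 by omega)
  obtain ⟨T₂, hT₂⟩ := hq.substr_eq_cons_s15 hq.2.1
  rw [hT₁, hT₂] at hW
  exact hW.exists_eq_cons

theorem exists_nthOccPos_straddle {V : List α} (hi : NthOccPos S σ 1 i)
    (hsq : (σ :: V) ++ (σ :: V) <+ S) :
    ∃ q, NthOccPos S σ ((S.take (q - 1)).count σ + 1) q ∧
      (σ :: V).count σ ≤ (S.take (q - 1)).count σ ∧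
      (S.take (q - 1)).count σ + (σ :: V).count σ ≤ S.count σ ∧
      σ :: V <+ substr S i (q - 1) ∧ σ :: V <+ substr S q S.length := by
  obtain ⟨m, hm, h₁, h₂⟩ := exists_sublist_take_sublist_drop hsq
  obtain ⟨p, hp, -, hVp, hcp⟩ := exists_nthOccPos_of_sublist_take (A := []) hm h₁
  obtain ⟨q, hq, hmq, hVq, hcq⟩ := exists_nthOccPos_of_sublist_drop (A := []) h₂
  have := (take_sublist_take_left (l := S) (show m ≤ q - 1 by omega)).count_le σ
  exact ⟨q, hq, by omega, hcq,
    hVp.trans (substr_sublist_substr hi.1 (hi.first_le hp) (by omega)), hVq⟩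

end Windows

namespace Alg1Output

variable [DecidableEq α] {S Y : List α} {σ : α}

theorem half_count_le (hY : Alg1Output S σ Y) : S.count σ / 2 ≤ Y.count σ := by
  obtain ⟨_, _, Y₀, -, -, hY₀, hcase⟩ := hY
  have hY₀Y : Y₀ <+ Y := by
    rcases hcase with ⟨rfl, -⟩ | ⟨-, _, -, -, hY⟩
    exacts [Sublist.refl _, hY.1]
  simpa using (hY₀.1.trans hY₀Y).count_le σ

theorem exists_eq_cons_s15 (hY : Alg1Output S σ Y) (hℓ : 2 ≤ S.count σ) : ∃ Y', Y = σ :: Y' := by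
  obtain ⟨i, ie1, Y₀, hi, hie1, hY₀, ⟨rfl, -⟩ | ⟨-, ie2, hie2, -, hY⟩⟩ := hY
  · exact exists_eq_cons_of_isMCSContaining_substr hi hie1 (by omega) hY₀
  · exact exists_eq_cons_of_isMCSContaining_substr hi hie2 (by omega) hY

theorem eq_of_square (hY : Alg1Output S σ Y) {V : List α} (hYV : Y <+ σ :: V)
    (hsq : (σ :: V) ++ (σ :: V) <+ S) : σ :: V = Y := by
  have hc := hY.half_count_le.trans (hYV.count_le σ)
  obtain ⟨i, ie1, Y₀, hi, hie1, hY₀, hcase⟩ := hY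
  obtain ⟨q, hq, hcq, hcq', h₁, h₂⟩ := exists_nthOccPos_straddle hi hsq
  obtain hk | hk : (S.take (q - 1)).count σ = S.count σ / 2 ∨
      (S.take (q - 1)).count σ = S.count σ / 2 + 1 := by omega
  · rw [hk] at hq
    obtain rfl := hq.unique_s15 hie1
    rcases hcase with ⟨rfl, -⟩ | ⟨-, _, -, -, hY⟩
    · exact hY₀.2.2.2 _ hYV h₁ h₂
    · have hW := hY₀.2.2.2 _ (hY.1.trans hYV) h₁ h₂
      exact hW.trans (hY.1.antisymm (hW ▸ hYV))
  · rw [hk] at hq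
    rcases hcase with ⟨rfl, hnot⟩ | ⟨-, ie2, hie2, -, hY⟩
    · exact absurd (hYV.trans h₂) (hnot (Nat.odd_iff.2 (by omega)) q hq)
    · obtain rfl := hq.unique_s15 hie2
      exact hY.2.2.2 _ hYV h₁ h₂

end Alg1Output

namespace Alg2Output

variable [DecidableEq α] {S Y Z : List α} {σ : α}

theorem sublist (hZ : Alg2Output S σ Y Z) : Y <+ Z := by
  obtain ⟨_, _, _, Z₀, -, -, -, hZ₀, ⟨rfl, -⟩ | ⟨-, _, -, -, hZ⟩⟩ := hZ
  exacts [hZ₀.1, hZ₀.1.trans hZ.1]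

theorem eq_of_square {A Y' : List α} (hZ : Alg2Output S σ (σ :: Y') Z)
    (he : S.count σ / 2 ≤ (σ :: Y').count σ) (hA : σ ∉ A) (hZW : Z <+ A ++ σ :: Y')
    (hsq : (A ++ σ :: Y') ++ (A ++ σ :: Y') <+ S) : A ++ σ :: Y' = Z := by
  obtain ⟨i1, i2, j1, Z₀, hi1, hi2, hj1, hZ₀, hcase⟩ := hZ
  have hZ₀Z : Z₀ <+ Z := by
    rcases hcase with ⟨rfl, -⟩ | ⟨-, _, -, -, hZ⟩
    exacts [Sublist.refl _, hZ.1]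
  obtain ⟨m, hm, htake, hdrop⟩ := exists_sublist_take_sublist_drop hsq
  obtain ⟨p, hp, hAp, hYp, hcp⟩ := exists_nthOccPos_of_sublist_take hm htake
  have hcd : (σ :: Y').count σ ≤ (S.drop m).count σ := by
    simpa [count_eq_zero_of_not_mem hA] using hdrop.count_le σ
  have hsum : (S.take m).count σ + (S.drop m).count σ = S.count σ := by
    rw [← count_append, take_append_drop]
  have hsplit {j : ℕ} (hj : LeftmostAnchor S (σ :: Y') p j) :
      A ++ σ :: Y' <+ substr S 1 j ∧ A ++ σ :: Y' <+ substr S (j + 1) S.length :=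
    hj.append_sublist_split (cons_ne_nil _ _) hp.1 hAp hYp hdrop
  obtain hk | hk : (S.take (p - 1)).count σ = 0 ∨ (S.take (p - 1)).count σ = 1 := by omega
  · rw [hk] at hp
    obtain rfl := hp.unique_s15 hi1
    have hW := hZ₀.2.2.2 _ (hZ₀Z.trans hZW) (hsplit hj1).1 (hsplit hj1).2
    exact hW.trans (hZ₀Z.antisymm (hW ▸ hZW))
  · rw [hk] at hp
    obtain rfl := hp.unique_s15 hi2
    rcases hcase with ⟨rfl, hnot⟩ | ⟨-, j2, hj2, -, hZ⟩
    · obtain ⟨j, hj⟩ := exists_leftmostAnchor hYp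
      exact absurd (hZW.trans (hsplit hj).2) (hnot (Nat.odd_iff.2 (by omega)) j hj)
    · exact hZ.2.2.2 _ hZW (hsplit hj2).1 (hsplit hj2).2

end Alg2Output

/-- If `σ` occurs exactly `ℓ ≥ 2` times in `S`, `Y` is an Algorithm-1
output and `Z` an Algorithm-2 output built from `Y`, then `ZZ` is not inner-extendable. -/
theorem alg2_output_not_innerExtendable {α : Type*} [DecidableEq α] (S : List α) (σ : α)
    (hℓ : 2 ≤ S.count σ) (Y Z : List α)
    (hY : Alg1Output S σ Y) (hZ : Alg2Output S σ Y Z) :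
    ¬ InnerExtendable S Z := by
  rintro ⟨y, Z₁, Z₂, rfl, -, -, hsq⟩
  obtain ⟨Y', rfl⟩ := hY.exists_eq_cons_s15 hℓ
  have hZW : Z₁ ++ Z₂ <+ Z₁ ++ y :: Z₂ := (Sublist.refl Z₁).append (sublist_cons_self y Z₂)
  have hYW := hZ.sublist.trans hZW
  obtain ⟨A, V, hW, hA⟩ := eq_append_cons_of_mem (hYW.subset mem_cons_self)
  have hsq' : (A ++ σ :: V) ++ (A ++ σ :: V) <+ S := by rw [← hW]; simpa using hsq
  rw [hW] at hZW hYW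
  have hV : σ :: V = σ :: Y' := hY.eq_of_square (hYW.of_cons_append_of_notMem hA)
    (((sublist_append_right _ _).append (sublist_append_right _ _)).trans hsq')
  rw [hV] at hW hZW hsq'
  simpa using congrArg length (hW.trans (hZ.eq_of_square hY.half_count_le hA hZW hsq'))
end
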